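/- Let A ⊆ Y with ∅ ≠ Cl₊A ≠ Y. Then Inf A ∪ (Inf A − Int C) ∪ (Inf A + Int C) = Y. -/

import Mathlib

open Set Pointwise

variable {Y : Type*} [AddCommGroup Y] [Module ℝ Y] [TopologicalSpace Y]
  [IsTopologicalAddGroup Y] [ContinuousSMul ℝ Y]

/-- Upper closure of a set with respect to the cone `C`. -/
def upClo (C A : Set Y) : Set Y := closure (A + C)

/-- Weakly minimal elements of `A` with respect to the cone `C`. -/
def wMinSet (C A : Set Y) : Set Y := {y ∈ A | ({y} - interior C) ∩ A = ∅}

/-- Infimal set of `A` with respect to the cone `C`. -/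
def infSet (C A : Set Y) : Set Y := wMinSet C (upClo C A)

/-!
Fix `e ∈ Int C`. The upper closure `B = Cl₊A` is closed and satisfies `B + Int C ⊆ Int B`, so a
point of `B` outside `Int B` is weakly minimal in `B`, i.e. lies in `Inf A`. On every line
`t ↦ y + t • e` the set of parameters landing in `B` is closed, nonempty (because `B ≠ ∅`) and
bounded below (because `B ≠ Y`), since `e` absorbs every direction into `Int C`. Its least element
`t₀` gives a point `w = y + t₀ • e ∈ Inf A`, and `y = w - t₀ • e` lies in `Inf A`,
`Inf A - Int C` or `Inf A + Int C` according to the sign of `t₀`.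
-/

open Filter Topology

namespace ConeOrder

variable {E : Type*} {C : Set E}

theorem add_self_subset [AddCommGroup E] [Module ℝ E] (hC : Convex ℝ C)
    (hCone : ∀ r : ℝ, 0 < r → r • C ⊆ C) : C + C ⊆ C := by
  have h := hC.add_smul zero_le_one zero_le_one
  rw [one_smul] at h
  rw [← h]
  exact hCone _ (by norm_num)

theorem smul_interior_subset [TopologicalSpace E] [MulAction ℝ E] [ContinuousConstSMul ℝ E]
    (hCone : ∀ r : ℝ, 0 < r → r • C ⊆ C) {r : ℝ} (hr : 0 < r) :
    r • interior C ⊆ interior C := by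
  rw [← interior_smul₀ hr.ne']
  exact interior_mono (hCone r hr)

theorem eventually_add_smul_mem_interior [AddCommGroup E] [Module ℝ E] [TopologicalSpace E]
    [ContinuousAdd E] [ContinuousSMul ℝ E] (hCone : ∀ r : ℝ, 0 < r → r • C ⊆ C) {e : E}
    (he : e ∈ interior C) (v : E) :
    ∀ᶠ t : ℝ in atTop, v + t • e ∈ interior C := by
  have hnear : ∀ᶠ s in 𝓝 (0 : ℝ), e + s • v ∈ interior C := by
    have hcont : Continuous fun s : ℝ => e + s • v := by fun_prop
    exact (hcont.tendsto' 0 e (by simp)).eventually (isOpen_interior.mem_nhds he)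
  filter_upwards [tendsto_inv_atTop_zero.eventually hnear, eventually_gt_atTop 0]
    with t ht htpos
  have hrescale : v + t • e = t • (e + t⁻¹ • v) := by
    rw [smul_add, smul_inv_smul₀ htpos.ne', add_comm]
  rw [hrescale]
  exact smul_interior_subset hCone htpos (smul_mem_smul_set ht)

theorem upClo_add_interior_subset [AddCommGroup E] [TopologicalSpace E] [IsTopologicalAddGroup E]
    (A : Set E) (hCC : C + C ⊆ C) : upClo C A + interior C ⊆ interior (upClo C A) := by
  rw [upClo, isOpen_interior.closure_add]
  refine interior_maximal ?_ isOpen_interior.add_left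
  calc A + C + interior C = A + (C + interior C) := add_assoc _ _ _
    _ ⊆ A + C := add_subset_add_left ((add_subset_add_left interior_subset).trans hCC)
    _ ⊆ closure (A + C) := subset_closure

theorem mem_wMinSet_of_notMem_interior [AddCommGroup E] [TopologicalSpace E] {B : Set E}
    (hB : B + interior C ⊆ interior B) {x : E} (hx : x ∈ B) (hx' : x ∉ interior B) :
    x ∈ wMinSet C B := by
  refine ⟨hx, eq_empty_iff_forall_notMem.2 ?_⟩
  rintro _ ⟨⟨_, rfl, c, hc, rfl⟩, hxc⟩
  exact hx' (by simpa using hB (add_mem_add hxc hc))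

theorem exists_add_smul_mem_notMem_interior [AddCommGroup E] [Module ℝ E] [TopologicalSpace E]
    [ContinuousAdd E] [ContinuousSMul ℝ E] {B : Set E} (hB : B + interior C ⊆ interior B)
    (hBc : IsClosed B) (hCone : ∀ r : ℝ, 0 < r → r • C ⊆ C) {e : E} (he : e ∈ interior C)
    (hBne : B.Nonempty) (hBuniv : B ≠ univ) (y : E) :
    ∃ t : ℝ, y + t • e ∈ B ∧ y + t • e ∉ interior B := by
  have hline : Continuous fun t : ℝ => y + t • e := by fun_prop
  set T := (fun t : ℝ => y + t • e) ⁻¹' B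
  obtain ⟨b, hb⟩ := hBne
  obtain ⟨z, hz⟩ := (ne_univ_iff_exists_notMem B).1 hBuniv
  have hTne : T.Nonempty := by
    obtain ⟨t, ht⟩ := (eventually_add_smul_mem_interior hCone he (y - b)).exists
    have hsplit : b + (y - b + t • e) = y + t • e := by abel
    exact ⟨t, show y + t • e ∈ B from hsplit ▸ interior_subset (hB (add_mem_add hb ht))⟩
  have hTbdd : BddBelow T := by
    obtain ⟨M, hM⟩ := eventually_atTop.1 (eventually_add_smul_mem_interior hCone he (z - y))
    refine ⟨-M, fun t ht => le_of_not_gt fun htM => hz ?_⟩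
    have hsplit : y + t • e + (z - y + (-t) • e) = z := by rw [neg_smul]; abel
    exact hsplit ▸ interior_subset (hB (add_mem_add ht (hM (-t) (by linarith))))
  refine ⟨sInf T, (hBc.preimage hline).csInf_mem hTne hTbdd, fun hint => ?_⟩
  have hnear : ∀ᶠ t in 𝓝 (sInf T), t ∈ T :=
    (hline.tendsto _ |>.eventually (isOpen_interior.mem_nhds hint)).mono
      fun _ h => interior_subset (s := B) h
  obtain ⟨t, hlt, ht⟩ := hnear.exists_lt
  exact (csInf_le hTbdd ht).not_gt hlt

end ConeOrder

open ConeOrder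

theorem stmt_5_general (C A : Set Y) (hC : Convex ℝ C)
    (hCone : ∀ r : ℝ, 0 < r → r • C ⊆ C)
    (hInt : (interior C).Nonempty)
    (h1 : (upClo C A).Nonempty) (h2 : upClo C A ≠ univ) :
    infSet C A ∪ (infSet C A - interior C) ∪ (infSet C A + interior C) = univ := by
  obtain ⟨e, he⟩ := hInt
  have hB := upClo_add_interior_subset A (add_self_subset hC hCone)
  refine eq_univ_of_forall fun y => ?_
  obtain ⟨t, hw, hw'⟩ :=
    exists_add_smul_mem_notMem_interior hB isClosed_closure hCone he h1 h2 y
  have hinf : y + t • e ∈ infSet C A := mem_wMinSet_of_notMem_interior hB hw hw'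
  rcases lt_trichotomy t 0 with ht | rfl | ht
  · refine Or.inr ⟨y + t • e, hinf, (-t) • e, smul_interior_subset hCone (neg_pos.2 ht)
      (smul_mem_smul_set he), ?_⟩
    simp
  · exact Or.inl (Or.inl (by simpa using hinf))
  · exact Or.inl (Or.inr ⟨y + t • e, hinf, t • e, smul_interior_subset hCone ht
      (smul_mem_smul_set he), by simp⟩)

theorem stmt_5 (C A : Set Y) (hC : Convex ℝ C)
    (hCone : ∀ r : ℝ, 0 < r → r • C ⊆ C)
    (hInt : (interior C).Nonempty) (hIntNe : interior C ≠ univ)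
    (h1 : (upClo C A).Nonempty) (h2 : upClo C A ≠ univ) :
    infSet C A ∪ (infSet C A - interior C) ∪ (infSet C A + interior C) = univ :=
  stmt_5_general C A hC hCone hInt h1 h2
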